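/- For every β > 0 and every positive integer K, the Erlang blocking probability satisfies E(β,K) ≥ max{1 − 1/β, 0}. -/

import Mathlib

/-!
Write `t k = (βK)^k / k!`. Since `βK · t k = (k+1) · t (k+1)` and `k + 1 ≤ K` below the top
term, `βK · ∑_{k<K} t k ≤ K · ∑_{k≤K} t k`; that is, the terms below `t K` make up at most a
`1/β` fraction of the whole sum.
-/

open Finset Nat

theorem mul_pow_div_factorial {𝕜 : Type*} [Field 𝕜] [CharZero 𝕜] (a : 𝕜) (k : ℕ) :
    a * (a ^ k / k !) = (k + 1) * (a ^ (k + 1) / (k + 1)!) := by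
  rw [Nat.factorial_succ, Nat.cast_mul, pow_succ]
  field_simp
  push_cast
  ring

section

variable {𝕜 : Type*} [Field 𝕜] [LinearOrder 𝕜] [IsStrictOrderedRing 𝕜]

theorem mul_sum_range_pow_div_factorial_le {a : 𝕜} (ha : 0 ≤ a) (n : ℕ) :
    a * ∑ k ∈ range n, a ^ k / k ! ≤ n * ∑ k ∈ range (n + 1), a ^ k / k ! := by
  calc a * ∑ k ∈ range n, a ^ k / k !
      = ∑ k ∈ range n, (k + 1 : 𝕜) * (a ^ (k + 1) / (k + 1)!) := by
        rw [mul_sum]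
        exact sum_congr rfl fun k _ ↦ mul_pow_div_factorial a k
    _ ≤ ∑ k ∈ range n, (n : 𝕜) * (a ^ (k + 1) / (k + 1)!) := by
        gcongr with k hk
        exact_mod_cast mem_range.mp hk
    _ ≤ n * ∑ k ∈ range (n + 1), a ^ k / k ! := by
        rw [← mul_sum, sum_range_succ' _ n]
        gcongr
        simp

theorem one_sub_div_mul_sum_range_pow_div_factorial_le {a : 𝕜} (ha : 0 < a) (n : ℕ) :
    (1 - n / a) * ∑ k ∈ range (n + 1), a ^ k / k ! ≤ a ^ n / n ! := by
  have key := mul_sum_range_pow_div_factorial_le ha.le n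
  rw [one_sub_div ha.ne', div_mul_eq_mul_div, div_le_iff₀ ha]
  rw [sum_range_succ] at key ⊢
  linear_combination key

end

theorem erlang_blocking_lower_bound (β : ℝ) (hβ : 0 < β) (K : ℕ) (hK : 1 ≤ K) :
    ((β * K) ^ K / (Nat.factorial K : ℝ)) /
        (∑ k ∈ Finset.range (K + 1), (β * K) ^ k / (Nat.factorial k : ℝ))
      ≥ max (1 - 1 / β) 0 := by
  have hK₀ : (0 : ℝ) < K := by exact_mod_cast hK
  have ha : 0 < β * K := mul_pos hβ hK₀
  have hS : 0 < ∑ k ∈ range (K + 1), (β * K) ^ k / (k ! : ℝ) :=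
    sum_pos (fun k _ ↦ by positivity) nonempty_range_add_one
  have hbound := one_sub_div_mul_sum_range_pow_div_factorial_le ha K
  rw [div_mul_cancel_right₀ hK₀.ne', ← one_div] at hbound
  exact max_le ((le_div_iff₀ hS).mpr hbound) (by positivity)
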